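/- Let L be a non-abelian 3-dimensional anti-commutative algebra over a field F with char F ≠ 2 such that Aut(L) acts irreducibly on L. Then L satisfies the Jacobi identity, i.e. L is a Lie algebra, and L is simple. -/

import Mathlib

variable {F L : Type*} [Field F] [AddCommGroup L] [Module F L]

/-- A linear automorphism of `L` preserving the product `mul`. -/
def IsMulAut (mul : L →ₗ[F] L →ₗ[F] L) (e : L ≃ₗ[F] L) : Prop :=
  ∀ x y : L, e (mul x y) = mul (e x) (e y)

/-- `Aut(L)` acts irreducibly on `L`. -/
def IsIrredAlg (mul : L →ₗ[F] L →ₗ[F] L) : Prop :=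
  ∀ W : Submodule F L,
    (∀ e : L ≃ₗ[F] L, IsMulAut mul e → W.map (e : L →ₗ[F] L) = W) → W = ⊥ ∨ W = ⊤

/-- An ideal of the anti-commutative algebra `(L, mul)`. -/
def IsAlgIdeal (mul : L →ₗ[F] L →ₗ[F] L) (W : Submodule F L) : Prop :=
  ∀ x ∈ W, ∀ y : L, mul x y ∈ W

section JacAux

variable (mul : L →ₗ[F] L →ₗ[F] L)

/-- The Jacobiator of the product `mul`. -/
def jac (x y z : L) : L := mul x (mul y z) + mul y (mul z x) + mul z (mul x y)

variable {mul}

lemma isMulAut_symm {e : L ≃ₗ[F] L} (he : IsMulAut mul e) : IsMulAut mul e.symm := by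
  intro x y
  apply e.injective
  rw [he, e.apply_symm_apply, e.apply_symm_apply, e.apply_symm_apply]

lemma mul_skew (halt : ∀ x : L, mul x x = 0) (x y : L) : mul y x = - mul x y := by
  have h := halt (x + y)
  simp only [map_add, LinearMap.add_apply, halt, zero_add, add_zero] at h
  exact eq_neg_of_add_eq_zero_left h

lemma jac_cycle (x y z : L) : jac mul y z x = jac mul x y z := by
  unfold jac; abel

lemma jac_swap12 (halt : ∀ x : L, mul x x = 0) (x y z : L) :
    jac mul y x z = - jac mul x y z := by
  unfold jac
  rw [mul_skew halt z x, mul_skew halt y z, mul_skew halt x y, map_neg, map_neg, map_neg]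
  abel

lemma jac_swap23 (halt : ∀ x : L, mul x x = 0) (x y z : L) :
    jac mul x z y = - jac mul x y z := by
  rw [← jac_cycle, jac_swap12 halt, jac_cycle]

lemma jac_swap13 (halt : ∀ x : L, mul x x = 0) (x y z : L) :
    jac mul z y x = - jac mul x y z := by
  rw [← jac_cycle, jac_swap23 halt, jac_cycle]

lemma jac_xxz (halt : ∀ x : L, mul x x = 0) (x z : L) : jac mul x x z = 0 := by
  unfold jac
  rw [halt, map_zero, mul_skew halt x z, map_neg]
  abel

lemma jac_xyy (halt : ∀ x : L, mul x x = 0) (x y : L) : jac mul x y y = 0 := by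
  rw [← jac_cycle]; exact jac_xxz halt y x

lemma jac_xyx (halt : ∀ x : L, mul x x = 0) (x y : L) : jac mul x y x = 0 := by
  rw [jac_cycle]; exact jac_xxz halt x y

lemma jac_zero3 (x y : L) : jac mul x y 0 = 0 := by
  unfold jac; simp

lemma jac_zero2 (x z : L) : jac mul x 0 z = 0 := by
  unfold jac; simp

lemma jac_zero1 (y z : L) : jac mul 0 y z = 0 := by
  unfold jac; simp

lemma jac_add3 (x y : L) (a b : L) :
    jac mul x y (a + b) = jac mul x y a + jac mul x y b := by
  unfold jac
  simp only [map_add, LinearMap.add_apply]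
  abel

lemma jac_add2 (x z : L) (a b : L) :
    jac mul x (a + b) z = jac mul x a z + jac mul x b z := by
  unfold jac
  simp only [map_add, LinearMap.add_apply]
  abel

lemma jac_add1 (y z : L) (a b : L) :
    jac mul (a + b) y z = jac mul a y z + jac mul b y z := by
  unfold jac
  simp only [map_add, LinearMap.add_apply]
  abel

lemma jac_smul3 (x y : L) (t : F) (a : L) :
    jac mul x y (t • a) = t • jac mul x y a := by
  unfold jac
  simp only [map_smul, LinearMap.smul_apply, smul_add]

lemma jac_smul2 (x z : L) (t : F) (a : L) :
    jac mul x (t • a) z = t • jac mul x a z := by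
  unfold jac
  simp only [map_smul, LinearMap.smul_apply, smul_add]

lemma jac_smul1 (y z : L) (t : F) (a : L) :
    jac mul (t • a) y z = t • jac mul a y z := by
  unfold jac
  simp only [map_smul, LinearMap.smul_apply, smul_add]

lemma jac_aut {e : L ≃ₗ[F] L} (he : IsMulAut mul e) (x y z : L) :
    e (jac mul x y z) = jac mul (e x) (e y) (e z) := by
  have he' : ∀ x y : L, e (mul x y) = mul (e x) (e y) := he
  unfold jac
  simp only [map_add, he']

end JacAux

set_option maxHeartbeats 1000000

/-- A non-abelian 3-dimensional anti-commutative algebra over a field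
of characteristic `≠ 2` on which `Aut(L)` acts irreducibly satisfies the Jacobi
identity (so is a Lie algebra), and is simple. -/
theorem stmt14 (hchar : ringChar F ≠ 2)
    (hdim : Module.finrank F L = 3)
    (mul : L →ₗ[F] L →ₗ[F] L)
    (halt : ∀ x : L, mul x x = 0)
    (hna : ∃ x y : L, mul x y ≠ 0)
    (hirr : IsIrredAlg mul) :
    (∀ x y z : L, mul x (mul y z) + mul y (mul z x) + mul z (mul x y) = 0) ∧
    (∀ J : Submodule F L, IsAlgIdeal mul J → J = ⊥ ∨ J = ⊤) := by
  classical
  have hFD : FiniteDimensional F L := FiniteDimensional.of_finrank_eq_succ (n := 2) hdim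
  have hskew : ∀ x y : L, mul y x = - mul x y := mul_skew halt
  -- The span of all products is an invariant submodule, hence is everything.
  set S : Set L := {z | ∃ x y : L, mul x y = z} with hSdef
  have hSinv : ∀ e : L ≃ₗ[F] L, IsMulAut mul e →
      (Submodule.span F S).map (e : L →ₗ[F] L) = Submodule.span F S := by
    intro e he
    rw [Submodule.map_span]
    congr 1
    ext z
    simp only [Set.mem_image, LinearEquiv.coe_coe, hSdef, Set.mem_setOf_eq]
    constructor
    · rintro ⟨w, ⟨x, y, rfl⟩, rfl⟩
      exact ⟨e x, e y, (he x y).symm⟩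
    · rintro ⟨x, y, rfl⟩
      refine ⟨mul (e.symm x) (e.symm y), ⟨_, _, rfl⟩, ?_⟩
      rw [he]
      simp
  have hT : Submodule.span F S = ⊤ := by
    rcases hirr _ hSinv with h | h
    · exfalso
      obtain ⟨x, y, hxy⟩ := hna
      apply hxy
      have hm : mul x y ∈ Submodule.span F S := Submodule.subset_span ⟨x, y, rfl⟩
      rw [h] at hm
      simpa using hm
    · exact h
  -- The center (kernel of mul) is invariant, hence trivial.
  have hZmem : ∀ (e : L ≃ₗ[F] L), IsMulAut mul e →
      ∀ x ∈ LinearMap.ker mul, e x ∈ LinearMap.ker mul := by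
    intro e he x hx
    rw [LinearMap.mem_ker] at hx ⊢
    ext y
    have h1 := he x (e.symm y)
    rw [hx] at h1
    simp only [LinearMap.zero_apply, map_zero, LinearEquiv.apply_symm_apply] at h1
    simpa using h1.symm
  have hZinv : ∀ e : L ≃ₗ[F] L, IsMulAut mul e →
      (LinearMap.ker mul).map (e : L →ₗ[F] L) = LinearMap.ker mul := by
    intro e he
    apply le_antisymm
    · rw [Submodule.map_le_iff_le_comap]
      intro x hx
      exact hZmem e he x hx
    · intro x hx
      rw [Submodule.mem_map]
      exact ⟨e.symm x, hZmem e.symm (isMulAut_symm he) x hx, e.apply_symm_apply x⟩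
  have hZ : LinearMap.ker mul = ⊥ := by
    rcases hirr _ hZinv with h | h
    · exact h
    · exfalso
      obtain ⟨x, y, hxy⟩ := hna
      apply hxy
      have hm : x ∈ LinearMap.ker mul := by rw [h]; trivial
      rw [LinearMap.mem_ker] at hm
      rw [hm]
      rfl
  -- A basis
  obtain ⟨b, -⟩ : ∃ b : Module.Basis (Fin 3) F L, True :=
    ⟨Module.finBasisOfFinrankEq F L hdim, trivial⟩
  set v : L := jac mul (b 0) (b 1) (b 2) with hvdef
  set V : Submodule F L := Submodule.span F {v} with hVdef
  have h012 : jac mul (b 0) (b 1) (b 2) ∈ V := Submodule.mem_span_singleton_self v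
  have h120 : jac mul (b 1) (b 2) (b 0) ∈ V := by rw [jac_cycle]; exact h012
  have h201 : jac mul (b 2) (b 0) (b 1) ∈ V := by rw [jac_cycle, jac_cycle]; exact h012
  have h102 : jac mul (b 1) (b 0) (b 2) ∈ V := by
    rw [jac_swap12 halt]; exact neg_mem h012
  have h021 : jac mul (b 0) (b 2) (b 1) ∈ V := by
    rw [jac_swap23 halt]; exact neg_mem h012
  have h210 : jac mul (b 2) (b 1) (b 0) ∈ V := by
    rw [jac_swap13 halt]; exact neg_mem h012
  have hbasis : ∀ i j k : Fin 3, jac mul (b i) (b j) (b k) ∈ V := by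
    intro i j k
    fin_cases i <;> fin_cases j <;> fin_cases k <;>
      first
        | exact h012 | exact h120 | exact h201 | exact h102 | exact h021 | exact h210
        | (rw [jac_xxz halt]; exact zero_mem _)
        | (rw [jac_xyy halt]; exact zero_mem _)
        | (rw [jac_xyx halt]; exact zero_mem _)
  have hxtop : ∀ x : L, x ∈ Submodule.span F (Set.range b) := by
    rw [b.span_eq]; intro x; trivial
  have stepA : ∀ (i j : Fin 3) (z : L), jac mul (b i) (b j) z ∈ V := by
    intro i j z
    induction hxtop z using Submodule.span_induction with
    | mem w hw => obtain ⟨k, rfl⟩ := hw; exact hbasis i j k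
    | zero => rw [jac_zero3]; exact zero_mem _
    | add a c _ _ iha ihc => rw [jac_add3]; exact add_mem iha ihc
    | smul t a _ iha => rw [jac_smul3]; exact Submodule.smul_mem _ _ iha
  have stepB : ∀ (i : Fin 3) (y z : L), jac mul (b i) y z ∈ V := by
    intro i y z
    induction hxtop y using Submodule.span_induction with
    | mem w hw => obtain ⟨j, rfl⟩ := hw; exact stepA i j z
    | zero => rw [jac_zero2]; exact zero_mem _
    | add a c _ _ iha ihc => rw [jac_add2]; exact add_mem iha ihc
    | smul t a _ iha => rw [jac_smul2]; exact Submodule.smul_mem _ _ iha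
  have key : ∀ x y z : L, jac mul x y z ∈ V := by
    intro x y z
    induction hxtop x using Submodule.span_induction with
    | mem w hw => obtain ⟨i, rfl⟩ := hw; exact stepB i y z
    | zero => rw [jac_zero1]; exact zero_mem _
    | add a c _ _ iha ihc => rw [jac_add1]; exact add_mem iha ihc
    | smul t a _ iha => rw [jac_smul1]; exact Submodule.smul_mem _ _ iha
  have hVinv : ∀ e : L ≃ₗ[F] L, IsMulAut mul e → V.map (e : L →ₗ[F] L) = V := by
    have hev : ∀ (e : L ≃ₗ[F] L), IsMulAut mul e → ∀ x ∈ V, e x ∈ V := by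
      intro e he x hx
      rw [hVdef, Submodule.mem_span_singleton] at hx
      obtain ⟨c, rfl⟩ := hx
      rw [map_smul]
      refine Submodule.smul_mem _ _ ?_
      rw [hvdef, jac_aut he]
      exact key _ _ _
    intro e he
    apply le_antisymm
    · rw [Submodule.map_le_iff_le_comap]
      intro x hx
      exact hev e he x hx
    · intro x hx
      rw [Submodule.mem_map]
      exact ⟨e.symm x, hev e.symm (isMulAut_symm he) x hx, e.apply_symm_apply x⟩
  have hv0 : v = 0 := by
    by_cases hv : v = 0
    · exact hv
    exfalso
    rcases hirr V hVinv with h | h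
    · have hm : v ∈ V := Submodule.mem_span_singleton_self v
      rw [h] at hm
      exact hv (by simpa using hm)
    · have h1 : Module.finrank F V = 1 := by
        rw [hVdef]; exact finrank_span_singleton hv
      rw [h, finrank_top, hdim] at h1
      norm_num at h1
  have hjac : ∀ x y z : L, jac mul x y z = 0 := by
    intro x y z
    have hm := key x y z
    rw [hVdef, hv0, Submodule.span_zero_singleton] at hm
    simpa using hm
  constructor
  · intro x y z
    have := hjac x y z
    unfold jac at this
    exact this
  -- Simplicity
  intro Jid hJ
  by_cases hbot : Jid = ⊥
  · exact Or.inl hbot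
  right
  by_contra htop
  obtain ⟨x, hxJ, hx0⟩ := (Submodule.ne_bot_iff Jid).mp hbot
  have hlt : Module.finrank F Jid < 3 := by
    have h1 := Submodule.finrank_lt (K := F) (V := L) htop
    rwa [hdim] at h1
  have hpos : 0 < Module.finrank F Jid := by
    have h1 : Module.finrank F (Submodule.span F {x}) ≤ Module.finrank F Jid :=
      Submodule.finrank_mono (by rw [Submodule.span_le, Set.singleton_subset_iff]; exact hxJ)
    rw [finrank_span_singleton hx0] at h1
    omega
  have hr12 : Module.finrank F Jid = 1 ∨ Module.finrank F Jid = 2 := by omega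
  rcases hr12 with hr1 | hr2
  · -- dimension 1: generator is central, contradiction
    have hJx : Jid = Submodule.span F {x} := by
      refine (Submodule.eq_of_le_of_finrank_eq
        (by rw [Submodule.span_le, Set.singleton_subset_iff]; exact hxJ) ?_).symm
      rw [hr1, finrank_span_singleton hx0]
    have hmulx : ∀ y : L, ∃ a : F, mul x y = a • x := by
      intro y
      have hm : mul x y ∈ Jid := hJ x hxJ y
      rw [hJx, Submodule.mem_span_singleton] at hm
      obtain ⟨a, ha⟩ := hm
      exact ⟨a, ha.symm⟩
    have hcen : mul x = 0 := by
      ext w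
      simp only [LinearMap.zero_apply]
      have hw : w ∈ Submodule.span F S := by rw [hT]; trivial
      induction hw using Submodule.span_induction with
      | mem p hp =>
        obtain ⟨y, z, rfl⟩ := hp
        obtain ⟨a, ha⟩ := hmulx y
        obtain ⟨c, hc⟩ := hmulx z
        have hzx : mul z x = -(c • x) := by rw [hskew x z, hc]
        have expand : mul y (mul z x) + mul z (mul x y) = 0 := by
          rw [hzx, ha, map_neg, map_smul, map_smul, hskew x y, ha, hzx]
          simp only [smul_neg, neg_neg, smul_smul]
          rw [mul_comm]
          abel
        have hj := hjac x y z
        unfold jac at hj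
        rw [add_assoc, expand, add_zero] at hj
        exact hj
      | zero => exact map_zero _
      | add p q _ _ ihp ihq => rw [map_add, ihp, ihq, add_zero]
      | smul t p _ ihp => rw [map_smul, ihp, smul_zero]
    have hxk : x ∈ LinearMap.ker mul := LinearMap.mem_ker.mpr hcen
    rw [hZ] at hxk
    exact hx0 (by simpa using hxk)
  · -- dimension 2: an ideal of codimension 1 contains all products
    obtain ⟨w, -, hwJ⟩ := SetLike.exists_of_lt (lt_top_iff_ne_top.mpr htop : Jid < (⊤ : Submodule F L))
    have hWtop : Jid ⊔ Submodule.span F {w} = ⊤ := by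
      apply Submodule.eq_top_of_finrank_eq
      have hlt2 : Jid < Jid ⊔ Submodule.span F {w} := by
        refine lt_of_le_of_ne le_sup_left ?_
        intro hEq
        apply hwJ
        have hm : w ∈ Jid ⊔ Submodule.span F {w} :=
          Submodule.mem_sup_right (Submodule.mem_span_singleton_self w)
        rwa [← hEq] at hm
      have h3 : Module.finrank F (Jid ⊔ Submodule.span F {w} : Submodule F L) ≤ 3 := by
        rw [← hdim]; exact Submodule.finrank_le _
      have h4 := Submodule.finrank_lt_finrank_of_lt hlt2
      rw [hdim]
      omega
    have hdecomp : ∀ a : L, ∃ j ∈ Jid, ∃ c : F, a = j + c • w := by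
      intro a
      have hm : a ∈ Jid ⊔ Submodule.span F {w} := by rw [hWtop]; trivial
      rw [Submodule.mem_sup] at hm
      obtain ⟨j, hj, s, hs, hsum⟩ := hm
      rw [Submodule.mem_span_singleton] at hs
      obtain ⟨c, rfl⟩ := hs
      exact ⟨j, hj, c, hsum.symm⟩
    have hprod : ∀ a c : L, mul a c ∈ Jid := by
      intro a c
      obtain ⟨j1, hj1, s, rfl⟩ := hdecomp a
      obtain ⟨j2, hj2, t, rfl⟩ := hdecomp c
      have e1 : mul (j1 + s • w) (j2 + t • w)
          = mul j1 j2 + (s • mul w j2 + (t • mul j1 w + (t * s) • mul w w)) := by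
        simp only [map_add, map_smul, LinearMap.add_apply, LinearMap.smul_apply, smul_add,
          smul_smul]
        abel
      rw [e1, halt w, smul_zero, add_zero]
      refine add_mem (hJ j1 hj1 j2) (add_mem (Submodule.smul_mem _ _ ?_)
        (Submodule.smul_mem _ _ (hJ j1 hj1 w)))
      rw [hskew]
      exact neg_mem (hJ j2 hj2 w)
    have hle : Submodule.span F S ≤ Jid := by
      rw [Submodule.span_le]
      rintro _ ⟨a, c, rfl⟩
      exact hprod a c
    rw [hT] at hle
    exact htop (top_le_iff.mp hle)
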